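/- arXiv:2605.30081 — 9 statements merged into one kernel-verified Lean document; each statement's English description precedes it below -/
import Mathlib

section
/- Let z(τ, s) = w^(ε+1)(1 - sτ)^ε for w > 0, ε > 0, s ∈ (0,1], and τ ∈ [0, 1/s). Then the elasticity of z with respect to the actual retention rate 1 - τ equals α(τ,s)·ε, where α(τ,s) = s(1-τ)/(1-sτ). Moreover, for fixed τ ∈ (0,1), α(τ,s) is strictly increasing in s on (0,1], α(τ,s) → 0 as s → 0⁺, and α(τ,1) = 1. -/
/-- For `z(τ,s) = w^(ε+1)(1-sτ)^ε`, the elasticity of `z` with respect to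
the retention rate `1-τ` equals `α(τ,s)·ε` with `α(τ,s) = s(1-τ)/(1-sτ)`; moreover for
fixed `τ ∈ (0,1)`, `α(τ,·)` is strictly increasing on `(0,1]`, tends to `0` as `s → 0⁺`,
and `α(τ,1) = 1`. -/
theorem stmt1 (w ε : ℝ) (hw : 0 < w) (hε : 0 < ε)
    (z : ℝ → ℝ → ℝ) (hz : ∀ τ s, z τ s = w ^ (ε + 1) * (1 - s * τ) ^ ε)
    (α : ℝ → ℝ → ℝ) (hα : ∀ τ s, α τ s = s * (1 - τ) / (1 - s * τ)) :
    (∀ s ∈ Set.Ioc (0:ℝ) 1, ∀ τ : ℝ, 0 ≤ τ → τ < 1 / s →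
      (-(deriv (fun t => z t s) τ)) * (1 - τ) / z τ s = α τ s * ε) ∧
    (∀ τ : ℝ, 0 < τ → τ < 1 →
      StrictMonoOn (fun s => α τ s) (Set.Ioc (0:ℝ) 1) ∧
      Filter.Tendsto (fun s => α τ s) (nhdsWithin 0 (Set.Ioi 0)) (nhds 0) ∧
      α τ 1 = 1) := by
  constructor
  · rintro s ⟨hs0, hs1⟩ τ hτ0 hτs
    have hpos : 0 < 1 - s * τ := by
      have := (lt_div_iff₀ hs0).mp hτs
      nlinarith
    have hderiv : HasDerivAt (fun t => z t s)
        (w ^ (ε + 1) * (ε * (1 - s * τ) ^ (ε - 1) * (-s))) τ := by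
      have h1 : HasDerivAt (fun t : ℝ => 1 - s * t) (-s) τ := by
        simpa using ((hasDerivAt_id τ).const_mul s).const_sub 1
      have h2 : HasDerivAt (fun x : ℝ => x ^ ε) (ε * (1 - s * τ) ^ (ε - 1)) (1 - s * τ) :=
        Real.hasDerivAt_rpow_const (Or.inl hpos.ne')
      have := (h2.comp τ h1).const_mul (w ^ (ε + 1))
      simp only [hz]
      exact this
    rw [hderiv.deriv, hz, hα]
    have hw' : (0:ℝ) < w ^ (ε + 1) := Real.rpow_pos_of_pos hw _
    have hz1 : (1 - s * τ) ^ (ε - 1) = (1 - s * τ) ^ ε / (1 - s * τ) := by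
      rw [Real.rpow_sub hpos, Real.rpow_one]
    rw [hz1]
    have hzpow : (0:ℝ) < (1 - s * τ) ^ ε := Real.rpow_pos_of_pos hpos _
    field_simp
  · intro τ hτ0 hτ1
    refine ⟨?_, ?_, ?_⟩
    · rintro a ⟨ha0, ha1⟩ b ⟨hb0, hb1⟩ hab
      simp only [hα]
      have hda : 0 < 1 - a * τ := by nlinarith
      have hdb : 0 < 1 - b * τ := by nlinarith
      rw [div_lt_div_iff₀ hda hdb]
      nlinarith
    · have hc : ContinuousAt (fun s => α τ s) 0 := by
        have : ContinuousAt (fun s : ℝ => s * (1 - τ) / (1 - s * τ)) 0 := by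
          apply ContinuousAt.div
          · fun_prop
          · fun_prop
          · norm_num
        simpa [hα] using this
      have h0 : α τ 0 = 0 := by simp [hα]
      have := hc.tendsto
      rw [h0] at this
      exact this.mono_left nhdsWithin_le_nhds
    · rw [hα]
      rw [show (1:ℝ) - 1 * τ = 1 - τ by ring, one_mul, div_self (by linarith : (1:ℝ) - τ ≠ 0)]
end

section
/- Fix ε > 0, s ∈ (0,1], and a wage w > 0, and let the average wage-power term be W̄ = ∫₀¹ w_i^(1+ε) di. The consumption equivalent of an agent with wage w at tax rate τ ∈ [0, 1/s) is ĉ(w) = (1-sτ)^ε · [ ((1 - τ(1 + ε(1-s)))/(1+ε)) · w^(1+ε) + τ·W̄ ]. Then ĉ(w) is strictly increasing in w for all w > 0 if and only if τ < 1/(1 + ε(1-s)). -/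
/-- The consumption equivalent
`ĉ(w) = (1-sτ)^ε·[((1-τ(1+ε(1-s)))/(1+ε))·w^(1+ε) + τ·W̄]`, with
`W̄ = ∫₀¹ wᵢ^(1+ε) di`, is strictly increasing in `w` on `(0,∞)` if and only if
`τ < 1/(1+ε(1-s))`. -/
theorem stmt3 (ε s τ : ℝ) (hε : 0 < ε) (hs0 : 0 < s) (hs1 : s ≤ 1)
    (hτ0 : 0 ≤ τ) (hτ1 : τ < 1 / s)
    (wfun : ℝ → ℝ) (hw : ∀ i, 0 < wfun i)
    (Wbar : ℝ) (hW : Wbar = ∫ i in (0:ℝ)..1, wfun i ^ (1 + ε)) :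
    StrictMonoOn
      (fun w : ℝ =>
        (1 - s * τ) ^ ε *
          ((1 - τ * (1 + ε * (1 - s))) / (1 + ε) * w ^ (1 + ε) + τ * Wbar))
      (Set.Ioi (0:ℝ))
      ↔ τ < 1 / (1 + ε * (1 - s)) := by
  have hK : 0 < 1 + ε * (1 - s) := by nlinarith
  have hP : (0:ℝ) < (1 - s * τ) ^ ε := by
    have h1 : 0 < 1 - s * τ := by
      have := (lt_div_iff₀ hs0).mp hτ1
      nlinarith
    positivity
  have hpow : ∀ a b : ℝ, 0 < a → a < b → a ^ (1 + ε) < b ^ (1 + ε) := by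
    intro a b ha hab
    exact Real.rpow_lt_rpow ha.le hab (by linarith)
  constructor
  · intro hmono
    by_contra hτ
    push_neg at hτ
    have hA : (1 - τ * (1 + ε * (1 - s))) / (1 + ε) ≤ 0 := by
      have : 1 / (1 + ε * (1 - s)) ≤ τ := hτ
      have h2 : 1 ≤ τ * (1 + ε * (1 - s)) := by
        have := (div_le_iff₀ hK).mp this
        linarith
      apply div_nonpos_of_nonpos_of_nonneg <;> linarith
    have h12 := hmono (Set.mem_Ioi.mpr one_pos) (Set.mem_Ioi.mpr (by norm_num : (0:ℝ) < 2)) (by norm_num)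
    simp only at h12
    have hp12 : (1:ℝ) ^ (1 + ε) < 2 ^ (1 + ε) := hpow 1 2 one_pos (by norm_num)
    have := mul_le_mul_of_nonpos_left hp12.le hA
    nlinarith
  · intro hτ a ha b hb hab
    have hA : 0 < (1 - τ * (1 + ε * (1 - s))) / (1 + ε) := by
      have := (lt_div_iff₀ hK).mp hτ
      apply div_pos <;> linarith
    have := hpow a b (Set.mem_Ioi.mp ha) hab
    simp only
    have := mul_lt_mul_of_pos_left this hA
    nlinarith
end

section
/- Let z_i = w_i^(ε+1)(1-sτ)^ε, z̄ = ∫z_i di, and ĉ_i the consumption equivalent. Then the partial derivative of ĉ_i with respect to salience is ∂ĉ_i/∂s = (ετ²/(1-sτ))·[z_i(1-s) - z̄]. In particular, at s = 1 and τ > 0, ∂ĉ_i/∂s = -ετ²z̄/(1-τ) < 0 for every agent i, so a marginal reduction in salience at full salience (holding τ fixed) strictly increases every agent's consumption equivalent (a Pareto improvement). -/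
/-!
Substituting the optimal earnings `z = w^(ε+1) x^ε`, with `x = 1 - sτ`, into the disutility gives
`v(z) = w^(ε+1) x^(ε+1) / (1 + 1/ε)`, so near any `s` with `sτ < 1` the consumption equivalent is
an explicit combination of powers of `x`, which is differentiated by the chain rule. At `s = 1`
the term `z(1 - s)` vanishes and what remains is `-ετ² z̄/(1 - τ)`, negative because `z̄ > 0`:
the average `W̄ = ∫ w^(1+ε)` is the integral of a positive monotone, hence integrable, function.
-/

open Filter Topology

/-- `ĉ = z(1 - τ) - v(z) + τ z̄` at salience `t`, where `x = 1 - tτ`, `A = w^(ε+1)`, `W = W̄`,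
`z = A x^ε`, `v(z) = A x^(ε+1)/(1 + 1/ε)` and `z̄ = W x^ε`. -/
noncomputable def consumptionEquivalent (ε τ A W t : ℝ) : ℝ :=
  A * (1 - t * τ) ^ ε * (1 - τ) - A * (1 - t * τ) ^ (ε + 1) / (1 + 1 / ε)
    + τ * (W * (1 - t * τ) ^ ε)

lemma rpow_div_self_rpow_one_add_inv {ε w x : ℝ} (hε : ε ≠ 0) (hw : 0 < w) (hx : 0 ≤ x) :
    (w ^ (ε + 1) * x ^ ε / w) ^ (1 + 1 / ε) = w ^ (ε + 1) * x ^ (ε + 1) := by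
  have hexp : ε * (1 + 1 / ε) = ε + 1 := by field_simp
  rw [mul_div_right_comm, ← Real.rpow_sub_one hw.ne', add_sub_cancel_right,
    Real.mul_rpow (by positivity) (by positivity), ← Real.rpow_mul hw.le,
    ← Real.rpow_mul hx, hexp]

lemma hasDerivAt_one_sub_mul_rpow {τ p s : ℝ} (hs : 0 < 1 - s * τ) :
    HasDerivAt (fun t => (1 - t * τ) ^ p) (-(p * τ) * (1 - s * τ) ^ (p - 1)) s := by
  have hlin : HasDerivAt (fun t : ℝ => 1 - t * τ) (-τ) s := by
    simpa using ((hasDerivAt_id s).mul_const τ).const_sub 1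
  convert hlin.rpow_const (p := p) (Or.inl hs.ne') using 1
  ring

lemma hasDerivAt_consumptionEquivalent {ε τ A W s : ℝ} (hε : 0 < ε) (hs : 0 < 1 - s * τ) :
    HasDerivAt (consumptionEquivalent ε τ A W)
      ((ε * τ ^ 2 / (1 - s * τ)) *
        (A * (1 - s * τ) ^ ε * (1 - s) - W * (1 - s * τ) ^ ε)) s := by
  have hε' := hasDerivAt_one_sub_mul_rpow (p := ε) hs
  have hε1 := hasDerivAt_one_sub_mul_rpow (p := ε + 1) hs
  refine ((((hε'.const_mul A).mul_const (1 - τ)).sub ((hε1.const_mul A).div_const _)).add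
    ((hε'.const_mul W).const_mul τ)).congr_deriv ?_
  have hpow : (1 - s * τ) ^ ε = (1 - s * τ) ^ (ε - 1) * (1 - s * τ) := by
    rw [← Real.rpow_add_one hs.ne', sub_add_cancel]
  rw [add_sub_cancel_right, hpow, div_mul_eq_mul_div, eq_div_iff hs.ne']
  field_simp
  ring

lemma eventuallyEq_consumptionEquivalent {ε τ w W s : ℝ} (hε : ε ≠ 0) (hw : 0 < w)
    (hs : 0 < 1 - s * τ) :
    (fun t => (w ^ (ε + 1) * (1 - t * τ) ^ ε) * (1 - τ)
        - ((w ^ (ε + 1) * (1 - t * τ) ^ ε / w) ^ (1 + 1 / ε)) / (1 + 1 / ε)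
        + τ * (W * (1 - t * τ) ^ ε))
      =ᶠ[𝓝 s] consumptionEquivalent ε τ (w ^ (ε + 1)) W := by
  have hcont : ContinuousAt (fun t : ℝ => 1 - t * τ) s := by fun_prop
  filter_upwards [hcont.eventually (eventually_gt_nhds hs)] with t ht
  rw [rpow_div_self_rpow_one_add_inv hε hw ht.le, consumptionEquivalent, mul_div_assoc]

lemma Monotone.intervalIntegral_pos {f : ℝ → ℝ} (hf : Monotone f) (hpos : ∀ x, 0 < f x)
    {a b : ℝ} (hab : a < b) : 0 < ∫ x in a..b, f x :=
  intervalIntegral.intervalIntegral_pos_of_pos_on hf.intervalIntegrable (fun x _ => hpos x) hab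

/-- With `zᵢ(s) = wᵢ^(ε+1)(1-sτ)^ε`, `z̄(s) = W̄(1-sτ)^ε`, and consumption
equivalent `ĉᵢ(s) = zᵢ(1-τ) - vᵢ(zᵢ) + τ z̄`, one has
`∂ĉᵢ/∂s = (ετ²/(1-sτ))·[zᵢ(1-s) - z̄]`; at `s = 1` (with `0 < τ < 1`) this equals
`-ετ²z̄/(1-τ) < 0` for every agent, so reducing salience at full salience is a Pareto
improvement. -/
theorem stmt6 (ε τ : ℝ) (hε : 0 < ε) (hτ : 0 < τ)
    (wfun : ℝ → ℝ) (hw : ∀ i, 0 < wfun i) (hmono : Monotone wfun)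
    (Wbar : ℝ) (hW : Wbar = ∫ j in (0:ℝ)..1, wfun j ^ (1 + ε))
    (chat : ℝ → ℝ → ℝ)
    (hchat : ∀ i s, chat i s =
      (wfun i ^ (ε + 1) * (1 - s * τ) ^ ε) * (1 - τ)
        - ((wfun i ^ (ε + 1) * (1 - s * τ) ^ ε / wfun i) ^ (1 + 1/ε)) / (1 + 1/ε)
        + τ * (Wbar * (1 - s * τ) ^ ε)) :
    (∀ i, ∀ s ∈ Set.Ioc (0:ℝ) 1, s * τ < 1 →
      HasDerivAt (fun t => chat i t)
        ((ε * τ ^ 2 / (1 - s * τ)) *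
          (wfun i ^ (ε + 1) * (1 - s * τ) ^ ε * (1 - s) - Wbar * (1 - s * τ) ^ ε)) s) ∧
    (τ < 1 → ∀ i,
      ((ε * τ ^ 2 / (1 - 1 * τ)) *
          (wfun i ^ (ε + 1) * (1 - 1 * τ) ^ ε * (1 - 1) - Wbar * (1 - 1 * τ) ^ ε))
        = -(ε * τ ^ 2 * (Wbar * (1 - τ) ^ ε)) / (1 - τ) ∧
      ((ε * τ ^ 2 / (1 - 1 * τ)) *
          (wfun i ^ (ε + 1) * (1 - 1 * τ) ^ ε * (1 - 1) - Wbar * (1 - 1 * τ) ^ ε)) < 0) := by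
  refine ⟨fun i s _ hsτ => ?_, fun hτ1 i => ?_⟩
  · have hs : 0 < 1 - s * τ := sub_pos.mpr hsτ
    simp only [hchat]
    exact (hasDerivAt_consumptionEquivalent hε hs).congr_of_eventuallyEq
      (eventuallyEq_consumptionEquivalent hε.ne' (hw i) hs)
  · have hWpos : 0 < Wbar := hW ▸ Monotone.intervalIntegral_pos
      (fun a b hab => Real.rpow_le_rpow (hw a).le (hmono hab) (by linarith))
      (fun j => Real.rpow_pos_of_pos (hw j) _) zero_lt_one
    have h1τ : 0 < 1 - τ := sub_pos.mpr hτ1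
    have hvalue : (ε * τ ^ 2 / (1 - 1 * τ)) *
        (wfun i ^ (ε + 1) * (1 - 1 * τ) ^ ε * (1 - 1) - Wbar * (1 - 1 * τ) ^ ε)
          = -(ε * τ ^ 2 * (Wbar * (1 - τ) ^ ε)) / (1 - τ) := by
      field_simp
      ring
    refine ⟨hvalue, hvalue ▸ div_neg_of_neg_of_pos ?_ h1τ⟩
    have hpow := Real.rpow_pos_of_pos h1τ ε
    exact neg_neg_of_pos (by positivity)
end

section
/- At an interior optimum of the utilitarian welfare function where the first-order condition ∫g_i(z̄ - z_i)di + (1-s)·(sτε/(1-sτ))·∫g_i z_i di - (sτε/(1-sτ))·ḡz̄ = 0 holds, the optimal tax rate satisfies sτε/(1-sτ) = (1 - h̄)/(1 - (1-s)h̄), where h̄ = (∫g_i z_i di)/(ḡ z̄). In particular, when s = 1 this reduces to τ/(1-τ) = (1-h̄)/ε. -/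
/-- If the first-order condition
`∫g(z̄-z) + (1-s)(sτε/(1-sτ))∫gz - (sτε/(1-sτ))ḡz̄ = 0` holds (written with
`G = ḡ = ∫g`, `Z = z̄ = ∫z`, `H = ∫gz`), then the optimal tax satisfies
`sτε/(1-sτ) = (1-h̄)/(1-(1-s)h̄)` with `h̄ = H/(GZ)`; when `s = 1` this reduces to
`τ/(1-τ) = (1-h̄)/ε`. -/
theorem stmt10 (ε τ s G Z H : ℝ) (hε : 0 < ε) (hs0 : 0 < s) (hs1 : s ≤ 1)
    (hsτ : s * τ < 1) (hG : 0 < G) (hZ : 0 < Z)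
    (hh0 : 0 < H / (G * Z)) (hh1 : H / (G * Z) < 1)
    (hFOC : (G * Z - H) + (1 - s) * (s * τ * ε / (1 - s * τ)) * H
        - (s * τ * ε / (1 - s * τ)) * (G * Z) = 0) :
    s * τ * ε / (1 - s * τ)
      = (1 - H / (G * Z)) / (1 - (1 - s) * (H / (G * Z))) ∧
    (s = 1 → τ / (1 - τ) = (1 - H / (G * Z)) / ε) := by
  have hGZ : 0 < G * Z := mul_pos hG hZ
  have hH : 0 < H := by
    by_contra h
    push_neg at h
    have := div_nonpos_of_nonpos_of_nonneg h hGZ.le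
    linarith
  have hd : 0 < 1 - s * τ := by linarith
  have hdenh : 0 < 1 - (1 - s) * (H / (G * Z)) := by
    nlinarith [div_pos hH hGZ]
  have hh : H / (G * Z) * (G * Z) = H := div_mul_cancel₀ H hGZ.ne'
  constructor
  · rw [div_eq_div_iff hd.ne' hdenh.ne']
    have h2 : H / (G * Z) = H / (G * Z) := rfl
    field_simp at hFOC ⊢
    nlinarith [hFOC, sq_nonneg (G*Z)]
  · intro hs
    subst hs
    simp only [one_mul] at *
    have hτd : 0 < 1 - τ := by linarith
    have key : τ * ε / (1 - τ) = 1 - H / (G * Z) := by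
      rw [div_eq_iff hτd.ne']
      field_simp at hFOC ⊢
      nlinarith [hFOC]
    field_simp at key ⊢
    nlinarith [key]
end

section
/- For the efficiency function μ(τ,s) = ∫ĉ_i(τ,s)di in the salience model, the partial derivatives satisfy ∂μ/∂s = -sτ²εz̄/(1-sτ) < 0 and ∂μ/∂τ = -s²τεz̄/(1-sτ) < 0, whenever τ > 0, s ∈ (0,1], sτ < 1, and z̄ > 0. -/
/-!
Integrating `ĉᵢ` over `i` shows that `μ(τ, s) = W̄ / (1 + ε) · (1 - p)^ε (1 + ε p)` depends on
`(τ, s)` only through the product `p = sτ`, and `d/dp [(1 - p)^ε (1 + ε p)] = -ε (1 + ε) p (1 - p)^ε / (1 - p)`.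
The chain rule then gives `∂μ/∂s = τ · ∂μ/∂p` and `∂μ/∂τ = s · ∂μ/∂p`.
-/

open intervalIntegral

noncomputable def efficiencyProfile (ε p : ℝ) : ℝ := (1 - p) ^ ε * (1 + ε * p)

theorem hasDerivAt_efficiencyProfile {ε p : ℝ} (hp : p ≠ 1) :
    HasDerivAt (efficiencyProfile ε)
      (-(ε * (1 + ε) * p * (1 - p) ^ ε) / (1 - p)) p := by
  have hp' : 1 - p ≠ 0 := sub_ne_zero.mpr hp.symm
  have hpow : HasDerivAt (fun q : ℝ => (1 - q) ^ ε) (-1 * ε * (1 - p) ^ (ε - 1)) p :=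
    ((hasDerivAt_id p).const_sub 1).rpow_const (Or.inl hp')
  have hlin : HasDerivAt (fun q : ℝ => 1 + ε * q) ε p := by
    simpa using ((hasDerivAt_id p).const_mul ε).const_add 1
  refine (hpow.mul hlin).congr_deriv ?_
  rw [Real.rpow_sub_one hp']
  field_simp
  ring

theorem integral_consumption_eq {ε : ℝ} (hε : 1 + ε ≠ 0) {w : ℝ → ℝ}
    (hw : IntervalIntegrable w MeasureTheory.volume 0 1) (τ s : ℝ) :
    ∫ i in (0 : ℝ)..1, (1 - s * τ) ^ ε *
        ((1 - τ * (1 + ε * (1 - s))) / (1 + ε) * w i + τ * ∫ j in (0 : ℝ)..1, w j) =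
      (∫ j in (0 : ℝ)..1, w j) / (1 + ε) * efficiencyProfile ε (s * τ) := by
  simp_rw [mul_add, ← mul_assoc]
  rw [integral_add (hw.const_mul _) intervalIntegrable_const, integral_const_mul,
    integral_const, efficiencyProfile]
  field_simp
  ring

theorem stmt11_general (ε : ℝ) (hε : 0 < ε)
    (wfun : ℝ → ℝ)
    (Wbar : ℝ) (hW : Wbar = ∫ j in (0:ℝ)..1, wfun j ^ (1 + ε)) (hWpos : 0 < Wbar)
    (chat : ℝ → ℝ → ℝ → ℝ)
    (hchat : ∀ i τ s, chat i τ s =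
      (1 - s * τ) ^ ε *
        ((1 - τ * (1 + ε * (1 - s))) / (1 + ε) * wfun i ^ (1 + ε) + τ * Wbar))
    (μ : ℝ → ℝ → ℝ)
    (hμ : ∀ τ s, μ τ s = ∫ i in (0:ℝ)..1, chat i τ s) :
    ∀ τ s : ℝ, 0 < τ → 0 < s → s ≤ 1 → s * τ < 1 →
      (HasDerivAt (fun s' => μ τ s')
        (-(s * τ ^ 2 * ε * (Wbar * (1 - s * τ) ^ ε)) / (1 - s * τ)) s ∧
       -(s * τ ^ 2 * ε * (Wbar * (1 - s * τ) ^ ε)) / (1 - s * τ) < 0) ∧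
      (HasDerivAt (fun τ' => μ τ' s)
        (-(s ^ 2 * τ * ε * (Wbar * (1 - s * τ) ^ ε)) / (1 - s * τ)) τ ∧
       -(s ^ 2 * τ * ε * (Wbar * (1 - s * τ) ^ ε)) / (1 - s * τ) < 0) := by
  intro τ s hτ hs _ hsτ
  -- A non-integrable `w^(1+ε)` would have integral `0`, contradicting `0 < W̄`.
  have hint : IntervalIntegrable (fun j => wfun j ^ (1 + ε)) MeasureTheory.volume 0 1 := by
    by_contra h
    exact hWpos.ne' (hW.trans (integral_undef h))
  have hclosed : ∀ τ s, μ τ s = Wbar / (1 + ε) * efficiencyProfile ε (s * τ) := fun τ s => by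
    simp_rw [hμ, hchat, hW]
    exact integral_consumption_eq (by positivity) hint τ s
  simp_rw [hclosed]
  have hpos : 0 < 1 - s * τ := by linarith
  have hprofile := hasDerivAt_efficiencyProfile (ε := ε) hsτ.ne
  refine ⟨⟨?_, div_neg_of_neg_of_pos (neg_neg_of_pos (by positivity)) hpos⟩,
    ⟨?_, div_neg_of_neg_of_pos (neg_neg_of_pos (by positivity)) hpos⟩⟩
  · refine ((hprofile.comp s (hasDerivAt_mul_const τ)).const_mul _).congr_deriv ?_
    field_simp
  · refine ((hprofile.comp τ (hasDerivAt_id τ |>.const_mul s)).const_mul _).congr_deriv ?_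
    field_simp

/-- For the efficiency function `μ(τ,s) = ∫ ĉᵢ(τ,s) di`,
`∂μ/∂s = -sτ²εz̄/(1-sτ) < 0` and `∂μ/∂τ = -s²τεz̄/(1-sτ) < 0` whenever `τ > 0`,
`s ∈ (0,1]`, `sτ < 1`, and `z̄ = W̄(1-sτ)^ε > 0`. -/
theorem stmt11 (ε : ℝ) (hε : 0 < ε)
    (wfun : ℝ → ℝ) (hw : ∀ i, 0 < wfun i) (hmono : Monotone wfun)
    (Wbar : ℝ) (hW : Wbar = ∫ j in (0:ℝ)..1, wfun j ^ (1 + ε)) (hWpos : 0 < Wbar)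
    (chat : ℝ → ℝ → ℝ → ℝ)
    (hchat : ∀ i τ s, chat i τ s =
      (1 - s * τ) ^ ε *
        ((1 - τ * (1 + ε * (1 - s))) / (1 + ε) * wfun i ^ (1 + ε) + τ * Wbar))
    (μ : ℝ → ℝ → ℝ)
    (hμ : ∀ τ s, μ τ s = ∫ i in (0:ℝ)..1, chat i τ s) :
    ∀ τ s : ℝ, 0 < τ → 0 < s → s ≤ 1 → s * τ < 1 →
      (HasDerivAt (fun s' => μ τ s')
        (-(s * τ ^ 2 * ε * (Wbar * (1 - s * τ) ^ ε)) / (1 - s * τ)) s ∧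
       -(s * τ ^ 2 * ε * (Wbar * (1 - s * τ) ^ ε)) / (1 - s * τ) < 0) ∧
      (HasDerivAt (fun τ' => μ τ' s)
        (-(s ^ 2 * τ * ε * (Wbar * (1 - s * τ) ^ ε)) / (1 - s * τ)) τ ∧
       -(s ^ 2 * τ * ε * (Wbar * (1 - s * τ) ^ ε)) / (1 - s * τ) < 0) :=
  stmt11_general ε hε wfun Wbar hW hWpos chat hchat μ hμ
end

section
/- Let μ(τ,s) be efficiency in the salience model with ε > 0, s ∈ (0,1], 0 < τ, sτ < 1, z̄ > 0. Then -μ_ττ = (εs²/(1-sτ)²)(1 - sτε)z̄, so μ_ττ < 0 whenever sτε < 1, in particular whenever τ is revenue efficient (τ ≤ 1/(s(1+ε))); i.e., efficiency is strictly concave in the tax rate and the marginal efficiency cost of taxation -μ_τ is increasing in τ. -/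
/-- For efficiency `μ(τ,s) = ∫ ĉᵢ di`,
`-μ_ττ = (εs²/(1-sτ)²)(1-sτε)z̄` with `z̄ = W̄(1-sτ)^ε`; hence under revenue efficiency
(`sτε < 1`), `μ_ττ < 0`: efficiency is strictly concave in the tax rate and the marginal
efficiency cost `-μ_τ` is increasing in `τ`. -/
theorem stmt13 (ε : ℝ) (hε : 0 < ε)
    (wfun : ℝ → ℝ) (hw : ∀ i, 0 < wfun i) (hmono : Monotone wfun)
    (Wbar : ℝ) (hW : Wbar = ∫ j in (0:ℝ)..1, wfun j ^ (1 + ε)) (hWpos : 0 < Wbar)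
    (chat : ℝ → ℝ → ℝ → ℝ)
    (hchat : ∀ i τ s, chat i τ s =
      (1 - s * τ) ^ ε *
        ((1 - τ * (1 + ε * (1 - s))) / (1 + ε) * wfun i ^ (1 + ε) + τ * Wbar))
    (μ : ℝ → ℝ → ℝ)
    (hμ : ∀ τ s, μ τ s = ∫ i in (0:ℝ)..1, chat i τ s) :
    ∀ τ s : ℝ, 0 < τ → 0 < s → s ≤ 1 → s * τ < 1 →
      (HasDerivAt (fun t => deriv (fun t' => μ t' s) t)
        (-((ε * s ^ 2 / (1 - s * τ) ^ 2) * (1 - s * τ * ε) *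
            (Wbar * (1 - s * τ) ^ ε))) τ) ∧
      (s * τ * ε < 1 →
        -((ε * s ^ 2 / (1 - s * τ) ^ 2) * (1 - s * τ * ε) *
            (Wbar * (1 - s * τ) ^ ε)) < 0) := by
  intro τ s hτ hs hs1 hsτ
  have ha : (0:ℝ) < 1 - s * τ := by linarith
  constructor
  · have hε1 : (0:ℝ) < 1 + ε := by linarith
    have hint : IntervalIntegrable (fun i => wfun i ^ (1+ε)) MeasureTheory.volume 0 1 := by
      apply Monotone.intervalIntegrable
      intro a b hab
      exact Real.rpow_le_rpow (hw a).le (hmono hab) (by linarith)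
    have hμf : ∀ t, μ t s = Wbar/(1+ε) * ((1 - s*t)^ε * (1 + ε*s*t)) := by
      intro t
      rw [hμ]
      have h1 : ∀ i, chat i t s = ((1-s*t)^ε * ((1 - t*(1+ε*(1-s)))/(1+ε))) * wfun i ^ (1+ε) + (1-s*t)^ε * (t*Wbar) := by
        intro i; rw [hchat]; ring
      simp_rw [h1]
      rw [intervalIntegral.integral_add (hint.const_mul _) intervalIntegrable_const,
        intervalIntegral.integral_const_mul, intervalIntegral.integral_const, ← hW]
      simp
      field_simp
      ring
    have hFeq : (fun t' => μ t' s) = (fun t => Wbar/(1+ε) * ((1 - s*t)^ε * (1 + ε*s*t))) :=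
      funext hμf
    rw [hFeq]
    set F := fun t => Wbar/(1+ε) * ((1 - s*t)^ε * (1 + ε*s*t)) with hF
    set G := fun t : ℝ => -(Wbar*ε*s^2) * (t * (1-s*t)^(ε-1)) with hGdef
    have hnhds : ∀ᶠ t in nhds τ, s * t < 1 := by
      have : Set.Iio (1/s) ∈ nhds τ := Iio_mem_nhds (by rw [lt_div_iff₀ hs]; linarith)
      filter_upwards [this] with t ht
      have := (lt_div_iff₀ hs).mp ht
      linarith
    have hderivF : ∀ t : ℝ, s * t < 1 → deriv F t = G t := by
      intro t ht
      have hat : (0:ℝ) < 1 - s * t := by linarith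
      have h1 : HasDerivAt (fun t : ℝ => 1 - s*t) (-(s*1)) t :=
        ((hasDerivAt_id t).const_mul s).const_sub 1
      have h2 := h1.rpow_const (p := ε) (Or.inl hat.ne')
      have h3 : HasDerivAt (fun t : ℝ => 1 + ε*s*t) (ε*s) t := by
        simpa using ((hasDerivAt_id t).const_mul (ε*s)).const_add 1
      have hFd : HasDerivAt F _ t := ((h2.mul h3).const_mul (Wbar/(1+ε)))
      rw [hFd.deriv]
      rw [hGdef]
      have hkey : (1-s*t)^ε = (1-s*t)^(ε-1) * (1-s*t) := by
        rw [← Real.rpow_add_one hat.ne' (ε-1)]; ring_nf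
      rw [hkey]; field_simp; ring
    have hG' : HasDerivAt G
        (-((ε * s ^ 2 / (1 - s * τ) ^ 2) * (1 - s * τ * ε) * (Wbar * (1 - s * τ) ^ ε))) τ := by
      have h1 : HasDerivAt (fun t : ℝ => 1 - s*t) (-(s*1)) τ :=
        ((hasDerivAt_id τ).const_mul s).const_sub 1
      have h2 := h1.rpow_const (p := ε - 1) (Or.inl ha.ne')
      have h5 : HasDerivAt G _ τ := ((hasDerivAt_id τ).mul h2).const_mul (-(Wbar*ε*s^2))
      convert h5 using 1
      have hb1 : (1-s*τ)^(ε-1) = (1-s*τ)^(ε-1-1) * (1-s*τ) := by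
        rw [← Real.rpow_add_one ha.ne' (ε-1-1)]; ring_nf
      have hb2 : (1-s*τ)^ε = (1-s*τ)^(ε-1-1) * (1-s*τ)^2 := by
        rw [show (1-s*τ)^ε = (1-s*τ)^(ε-1) * (1-s*τ) from by
          rw [← Real.rpow_add_one ha.ne' (ε-1)]; ring_nf, hb1]
        ring
      rw [hb1, hb2, id_eq]
      field_simp
      ring
    apply hG'.congr_of_eventuallyEq
    filter_upwards [hnhds] with t ht
    exact hderivF t ht
  · intro hrev
    have h1 : 0 < ε * s ^ 2 / (1 - s * τ) ^ 2 := by positivity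
    have h2 : 0 < 1 - s * τ * ε := by linarith
    have h3 : 0 < Wbar * (1 - s * τ) ^ ε := mul_pos hWpos (Real.rpow_pos_of_pos ha ε)
    have := mul_pos (mul_pos h1 h2) h3
    linarith
end

section
/- Let μ be efficiency in the salience model with ε > 0, s ∈ (0,1], τ > 0, sτ < 1, sτε < 1 (revenue efficiency), z̄ > 0. Then the cross partial satisfies -μ_sτ = ∫v_i''(z_i)(∂z_i/∂s)(∂z_i/∂τ)di - ∫(1 - v_i'(z_i))(∂²z_i/∂s∂τ)di > 0: the marginal efficiency cost of taxation is strictly increasing in salience. -/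
/-!
Integrating out the workers, efficiency depends on `(τ, s)` only through the perceived
rate `x = sτ`: `μ(τ, s) = W̄ / (1 + ε) · (1 - x)^ε (1 + εx)`. Hence
`μ_τ = -ε W̄ τ · s² (1 - sτ)^(ε-1)`, and differentiating once more in `s` gives
`-μ_sτ = ε W̄ τ s (1 - sτ)^(ε-2) (2 - sτ - εsτ)`. Both integrals defining the
right-hand side are multiples of `∫ zᵢ = (1 - sτ)^ε W̄`, and they combine to the same value,
which is positive because `sτ < 1` and `sτε < 1`.
-/

open intervalIntegral

lemma hasDerivAt_one_sub_rpow_mul_one_add (ε x : ℝ) (hx : 1 - x ≠ 0) :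
    HasDerivAt (fun y => (1 - y) ^ ε * (1 + ε * y))
      (-(ε * (1 + ε)) * x * (1 - x) ^ (ε - 1)) x := by
  have hlin : HasDerivAt (fun y : ℝ => 1 - y) (-1) x := by
    simpa using (hasDerivAt_id x).const_sub 1
  have hpow := (Real.hasDerivAt_rpow_const (p := ε) (Or.inl hx)).comp x hlin
  refine (hpow.mul (((hasDerivAt_id x).const_mul ε).const_add 1)).congr_deriv ?_
  simp only [Function.comp_apply, id_eq, Real.rpow_sub_one hx]
  field_simp
  ring

lemma hasDerivAt_efficiency_tau {ε : ℝ} (hε : 1 + ε ≠ 0) (W s τ : ℝ) (h : 1 - s * τ ≠ 0) :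
    HasDerivAt (fun t => W / (1 + ε) * ((1 - s * t) ^ ε * (1 + ε * (s * t))))
      (-(ε * W * τ) * (s ^ 2 * (1 - s * τ) ^ (ε - 1))) τ := by
  have hcomp := (hasDerivAt_one_sub_rpow_mul_one_add ε (s * τ) h).comp τ
    ((hasDerivAt_id τ).const_mul s)
  refine (hcomp.const_mul (W / (1 + ε))).congr_deriv ?_
  field_simp

lemma hasDerivAt_sq_mul_one_sub_rpow (ε τ s : ℝ) (h : 1 - s * τ ≠ 0) :
    HasDerivAt (fun s' => s' ^ 2 * (1 - s' * τ) ^ (ε - 1))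
      (s * (1 - s * τ) ^ ε * (2 - s * τ - ε * s * τ) / (1 - s * τ) ^ 2) s := by
  have hlin : HasDerivAt (fun s' : ℝ => 1 - s' * τ) (-τ) s := by
    simpa using ((hasDerivAt_id s).mul_const τ).const_sub 1
  have hpow := (Real.hasDerivAt_rpow_const (p := ε - 1) (Or.inl h)).comp s hlin
  refine ((hasDerivAt_pow 2 s).mul hpow).congr_deriv ?_
  simp only [Function.comp_apply, Real.rpow_sub_one h]
  field_simp
  ring

lemma efficiency_eq_of_integral {ε : ℝ} (hε : 1 + ε ≠ 0) (f : ℝ → ℝ)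
    (hf : IntervalIntegrable f MeasureTheory.volume 0 1)
    (W : ℝ) (hW : W = ∫ j in (0:ℝ)..1, f j) (τ s : ℝ) :
    (∫ i in (0:ℝ)..1, (1 - s * τ) ^ ε *
        ((1 - τ * (1 + ε * (1 - s))) / (1 + ε) * f i + τ * W)) =
      W / (1 + ε) * ((1 - s * τ) ^ ε * (1 + ε * (s * τ))) := by
  rw [integral_const_mul, integral_add (hf.const_mul _) intervalIntegrable_const,
    integral_const_mul, integral_const, ← hW]
  simp only [sub_zero, smul_eq_mul, one_mul]
  field_simp
  ring

lemma cross_partial_integrals_eq {ε : ℝ} (hε : ε ≠ 0) {s τ : ℝ} (h : 1 - s * τ ≠ 0)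
    (z : ℝ → ℝ) (hz : ∀ i, z i ≠ 0) :
    ((∫ i in (0:ℝ)..1,
          ((1 - s * τ) / (ε * z i)) * (-(ε * τ * z i) / (1 - s * τ)) *
            (-(ε * s * z i) / (1 - s * τ)))
      - ∫ i in (0:ℝ)..1,
          (1 - (1 - s * τ)) * (-(ε * (1 - s * τ * ε) / (1 - s * τ) ^ 2) * z i)) =
      ε * τ * (s * (2 - s * τ - ε * s * τ) / (1 - s * τ) ^ 2) * ∫ i in (0:ℝ)..1, z i := by
  have hfirst : ∀ i, ((1 - s * τ) / (ε * z i)) * (-(ε * τ * z i) / (1 - s * τ)) *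
      (-(ε * s * z i) / (1 - s * τ)) = ε * τ * s / (1 - s * τ) * z i := fun i => by
    field_simp [hz i]
  have hsecond : ∀ i, (1 - (1 - s * τ)) * (-(ε * (1 - s * τ * ε) / (1 - s * τ) ^ 2) * z i) =
      -(s * τ * ε * (1 - s * τ * ε) / (1 - s * τ) ^ 2) * z i := fun i => by
    ring
  simp only [hfirst, hsecond, integral_const_mul]
  field_simp
  ring

theorem stmt14_general (ε τ s : ℝ) (hε : 0 < ε) (hτ : 0 < τ) (hs0 : 0 < s)
    (hsτ : s * τ < 1) (hrev : s * τ * ε < 1)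
    (wfun : ℝ → ℝ) (hw : ∀ i, 0 < wfun i) (hmono : Monotone wfun)
    (Wbar : ℝ) (hW : Wbar = ∫ j in (0:ℝ)..1, wfun j ^ (1 + ε)) (hWpos : 0 < Wbar)
    (chat : ℝ → ℝ → ℝ → ℝ)
    (hchat : ∀ i τ' s', chat i τ' s' =
      (1 - s' * τ') ^ ε *
        ((1 - τ' * (1 + ε * (1 - s'))) / (1 + ε) * wfun i ^ (1 + ε) + τ' * Wbar))
    (μ : ℝ → ℝ → ℝ)
    (hμ : ∀ τ' s', μ τ' s' = ∫ i in (0:ℝ)..1, chat i τ' s')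
    (z : ℝ → ℝ) (hzdef : ∀ i, z i = wfun i ^ (1 + ε) * (1 - s * τ) ^ ε)
    (D : ℝ)
    (hD : D = (∫ i in (0:ℝ)..1,
          ((1 - s * τ) / (ε * z i)) * (-(ε * τ * z i) / (1 - s * τ)) *
            (-(ε * s * z i) / (1 - s * τ)))
      - ∫ i in (0:ℝ)..1,
          (1 - (1 - s * τ)) * (-(ε * (1 - s * τ * ε) / (1 - s * τ) ^ 2) * z i)) :
    HasDerivAt (fun s' => deriv (fun t => μ t s') τ) (-D) s ∧ 0 < D := by
  have ha : 0 < 1 - s * τ := by linarith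
  have hε1 : 1 + ε ≠ 0 := by positivity
  have hmono_pow : Monotone fun i => wfun i ^ (1 + ε) := fun i j hij =>
    Real.rpow_le_rpow (hw i).le (hmono hij) (by positivity)
  have hμ_eq : ∀ t s', μ t s' = Wbar / (1 + ε) * ((1 - s' * t) ^ ε * (1 + ε * (s' * t))) :=
    fun t s' => by
      simp only [hμ, hchat]
      exact efficiency_eq_of_integral hε1 _ hmono_pow.intervalIntegrable Wbar hW t s'
  have hμ_tau : (fun s' => deriv (fun t => μ t s') τ) =ᶠ[nhds s]
      fun s' => -(ε * Wbar * τ) * (s' ^ 2 * (1 - s' * τ) ^ (ε - 1)) := by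
    have hnear : ∀ᶠ s' in nhds s, 0 < 1 - s' * τ :=
      (continuous_const.sub (continuous_id.mul continuous_const)).continuousAt.eventually
        (eventually_gt_nhds ha)
    filter_upwards [hnear] with s' hs'
    simp only [hμ_eq]
    exact (hasDerivAt_efficiency_tau hε1 Wbar s' τ hs'.ne').deriv
  have hz_int : ∫ i in (0:ℝ)..1, z i = (1 - s * τ) ^ ε * Wbar := by
    simp only [hzdef, integral_mul_const, ← hW, mul_comm]
  have hz : ∀ i, z i ≠ 0 := fun i => by
    rw [hzdef]
    exact mul_ne_zero (Real.rpow_pos_of_pos (hw i) _).ne' (Real.rpow_pos_of_pos ha _).ne'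
  have hD_eq : D = ε * Wbar * τ *
      (s * (1 - s * τ) ^ ε * (2 - s * τ - ε * s * τ) / (1 - s * τ) ^ 2) := by
    rw [hD, cross_partial_integrals_eq hε.ne' ha.ne' z hz, hz_int]
    ring
  have hpos : 0 < 2 - s * τ - ε * s * τ := by linarith
  refine ⟨?_, ?_⟩
  · rw [hD_eq, ← neg_mul]
    exact ((hasDerivAt_sq_mul_one_sub_rpow ε τ s ha.ne').const_mul _).congr_of_eventuallyEq
      hμ_tau
  · rw [hD_eq]
    have ha_pow := Real.rpow_pos_of_pos ha ε
    positivity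

/-- For efficiency `μ(τ,s) = ∫ ĉᵢ di` with `ε > 0`, `s ∈ (0,1]`, `τ > 0`,
`sτ < 1`, `sτε < 1` (revenue efficiency), the cross partial satisfies
`-μ_sτ = ∫ vᵢ''(zᵢ)(∂zᵢ/∂s)(∂zᵢ/∂τ) di - ∫ (1-vᵢ'(zᵢ))(∂²zᵢ/∂s∂τ) di > 0`: the
marginal efficiency cost of taxation strictly increases in salience. Here
`zᵢ = wᵢ^(1+ε)(1-sτ)^ε`, `vᵢ'(zᵢ) = 1-sτ`, `vᵢ''(zᵢ) = (1-sτ)/(εzᵢ)`,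
`∂zᵢ/∂s = -ετzᵢ/(1-sτ)`, `∂zᵢ/∂τ = -εszᵢ/(1-sτ)`,
`∂²zᵢ/∂s∂τ = -(ε(1-sτε)/(1-sτ)²)zᵢ`. -/
theorem stmt14 (ε τ s : ℝ) (hε : 0 < ε) (hτ : 0 < τ) (hs0 : 0 < s) (hs1 : s ≤ 1)
    (hsτ : s * τ < 1) (hrev : s * τ * ε < 1)
    (wfun : ℝ → ℝ) (hw : ∀ i, 0 < wfun i) (hmono : Monotone wfun)
    (Wbar : ℝ) (hW : Wbar = ∫ j in (0:ℝ)..1, wfun j ^ (1 + ε)) (hWpos : 0 < Wbar)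
    (chat : ℝ → ℝ → ℝ → ℝ)
    (hchat : ∀ i τ' s', chat i τ' s' =
      (1 - s' * τ') ^ ε *
        ((1 - τ' * (1 + ε * (1 - s'))) / (1 + ε) * wfun i ^ (1 + ε) + τ' * Wbar))
    (μ : ℝ → ℝ → ℝ)
    (hμ : ∀ τ' s', μ τ' s' = ∫ i in (0:ℝ)..1, chat i τ' s')
    (z : ℝ → ℝ) (hzdef : ∀ i, z i = wfun i ^ (1 + ε) * (1 - s * τ) ^ ε)
    (D : ℝ)
    (hD : D = (∫ i in (0:ℝ)..1,
          ((1 - s * τ) / (ε * z i)) * (-(ε * τ * z i) / (1 - s * τ)) *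
            (-(ε * s * z i) / (1 - s * τ)))
      - ∫ i in (0:ℝ)..1,
          (1 - (1 - s * τ)) * (-(ε * (1 - s * τ * ε) / (1 - s * τ) ^ 2) * z i)) :
    HasDerivAt (fun s' => deriv (fun t => μ t s') τ) (-D) s ∧ 0 < D :=
  stmt14_general ε τ s hε hτ hs0 hsτ hrev wfun hw hmono Wbar hW hWpos chat hchat μ hμ z hzdef D hD
end

section
/- Let ĉ(i,θ) be a family of positive consumption profiles increasing in i, differentiable in θ, and let k(i,θ) = (∂ĉ/∂θ)/ĉ be the growth rate. If k(i,θ) is strictly increasing in i, then for each i ∈ (0,1), the Lorenz curve L(i,θ) = (∫₀^i ĉ(j,θ)dj)/(∫₀¹ĉ(j,θ)dj) is strictly decreasing in θ. (Consequently, by scale invariance of the Atkinson index, equality is decreasing in θ.) -/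
/-! If `k(·, θ)` is strictly increasing, then for `θ₁ < θ₂` the ratio `ĉ(·, θ₂) / ĉ(·, θ₁)` is
strictly increasing in `i`: for `x < y`, the `θ`-derivative of `ĉ(y, θ) / ĉ(x, θ)` is that ratio
times `k(y, θ) - k(x, θ) > 0`. Comparing with the value `r` of this ratio at `i`, the profile at
`θ₂` lies strictly below `r` times the profile at `θ₁` on `[0, i)` and above it on `[i, 1]`, so
the `θ₂` profile puts a strictly smaller share of its total mass on `[0, i]`. -/

open MeasureTheory Set

theorem strictMono_div_of_logDeriv_lt {u v : ℝ → ℝ} (hu : ∀ t, 0 < u t) (hv : ∀ t, 0 < v t)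
    (hud : Differentiable ℝ u) (hvd : Differentiable ℝ v)
    (h : ∀ t, logDeriv u t < logDeriv v t) : StrictMono fun t => v t / u t := by
  refine strictMono_of_deriv_pos fun t => ?_
  have hut := hu t
  have hvt := hv t
  have hlog := h t
  rw [logDeriv_apply, logDeriv_apply, div_lt_div_iff₀ hut hvt] at hlog
  rw [deriv_fun_div (hvd t) (hud t) hut.ne']
  exact div_pos (by linarith) (by positivity)

theorem integral_lt_integral_of_forall_Ioo_lt {f g : ℝ → ℝ} {a b : ℝ} (hab : a < b)
    (hf : IntervalIntegrable f volume a b) (hg : IntervalIntegrable g volume a b)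
    (h : ∀ x ∈ Ioo a b, f x < g x) : ∫ x in a..b, f x < ∫ x in a..b, g x := by
  have hpos := intervalIntegral.intervalIntegral_pos_of_pos_on (hg.sub hf)
    (fun x hx => sub_pos.2 (h x hx)) hab
  rw [intervalIntegral.integral_sub hg hf] at hpos
  linarith

theorem integral_div_integral_lt_of_strictMonoOn_div {f g : ℝ → ℝ} {a b c : ℝ}
    (hab : a < b) (hbc : b < c) (hf : ∀ x ∈ Icc a c, 0 < f x) (hg : ∀ x ∈ Icc a c, 0 < g x)
    (hfi : IntervalIntegrable f volume a c) (hgi : IntervalIntegrable g volume a c)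
    (hratio : StrictMonoOn (fun x => g x / f x) (Icc a c)) :
    (∫ x in a..b, g x) / (∫ x in a..c, g x) < (∫ x in a..b, f x) / (∫ x in a..c, f x) := by
  have hb : b ∈ Icc a c := ⟨hab.le, hbc.le⟩
  have sub_ab : uIcc a b ⊆ uIcc a c := uIcc_subset_uIcc_left (Icc_subset_uIcc hb)
  have sub_bc : uIcc b c ⊆ uIcc a c := uIcc_subset_uIcc_right (Icc_subset_uIcc hb)
  set r := g b / f b
  have below : ∫ x in a..b, g x < r * ∫ x in a..b, f x := by
    rw [← intervalIntegral.integral_const_mul]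
    refine integral_lt_integral_of_forall_Ioo_lt hab (hgi.mono_set sub_ab)
      ((hfi.mono_set sub_ab).const_mul r) fun x hx => ?_
    have hx' : x ∈ Icc a c := ⟨hx.1.le, hx.2.le.trans hbc.le⟩
    have := hratio hx' hb hx.2
    rwa [div_lt_iff₀ (hf x hx')] at this
  have above : r * ∫ x in b..c, f x ≤ ∫ x in b..c, g x := by
    rw [← intervalIntegral.integral_const_mul]
    refine intervalIntegral.integral_mono_on hbc.le ((hfi.mono_set sub_bc).const_mul r)
      (hgi.mono_set sub_bc) fun x hx => ?_
    have hx' : x ∈ Icc a c := ⟨hab.le.trans hx.1, hx.2⟩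
    have := hratio.monotoneOn hb hx' hx.1
    rwa [le_div_iff₀ (hf x hx')] at this
  have hAf := intervalIntegral.intervalIntegral_pos_of_pos_on (hfi.mono_set sub_ab)
    (fun x hx => hf x ⟨hx.1.le, hx.2.le.trans hbc.le⟩) hab
  have hCf := intervalIntegral.intervalIntegral_pos_of_pos_on (hfi.mono_set sub_bc)
    (fun x hx => hf x ⟨hab.le.trans hx.1.le, hx.2.le⟩) hbc
  have hAg := intervalIntegral.intervalIntegral_pos_of_pos_on (hgi.mono_set sub_ab)
    (fun x hx => hg x ⟨hx.1.le, hx.2.le.trans hbc.le⟩) hab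
  have hCg := intervalIntegral.intervalIntegral_pos_of_pos_on (hgi.mono_set sub_bc)
    (fun x hx => hg x ⟨hab.le.trans hx.1.le, hx.2.le⟩) hbc
  rw [← intervalIntegral.integral_add_adjacent_intervals (hfi.mono_set sub_ab)
      (hfi.mono_set sub_bc),
    ← intervalIntegral.integral_add_adjacent_intervals (hgi.mono_set sub_ab)
      (hgi.mono_set sub_bc), div_lt_div_iff₀ (by positivity) (by positivity)]
  have := mul_lt_mul_of_pos_right below hCf
  have := mul_le_mul_of_nonneg_left above hAf.le
  nlinarith

/-- Let `ĉ(i,θ)` be a family of positive consumption profiles increasing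
in `i` and differentiable in `θ`, with growth rate `k(i,θ) = (∂ĉ/∂θ)/ĉ`. If `k(·,θ)` is
strictly increasing in `i`, then for each `i ∈ (0,1)` the Lorenz curve
`L(i,θ) = (∫₀^i ĉ(j,θ) dj)/(∫₀¹ ĉ(j,θ) dj)` is strictly decreasing in `θ`. -/
theorem stmt17 (chat : ℝ → ℝ → ℝ)
    (hpos : ∀ i ∈ Set.Icc (0:ℝ) 1, ∀ θ : ℝ, 0 < chat i θ)
    (hmono : ∀ θ : ℝ, MonotoneOn (fun i => chat i θ) (Set.Icc (0:ℝ) 1))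
    (hdiff : ∀ i ∈ Set.Icc (0:ℝ) 1, Differentiable ℝ (fun θ => chat i θ))
    (hk : ∀ θ : ℝ, StrictMonoOn
      (fun i => deriv (fun t => chat i t) θ / chat i θ) (Set.Icc (0:ℝ) 1)) :
    ∀ i ∈ Set.Ioo (0:ℝ) 1,
      StrictAnti (fun θ =>
        (∫ j in (0:ℝ)..i, chat j θ) / (∫ j in (0:ℝ)..1, chat j θ)) := by
  rintro i ⟨hi0, hi1⟩ θ₁ θ₂ hθ
  have hint : ∀ θ, IntervalIntegrable (fun j => chat j θ) volume 0 1 := fun θ =>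
    ((hmono θ).mono (uIcc_of_le zero_le_one).subset).intervalIntegrable
  refine integral_div_integral_lt_of_strictMonoOn_div hi0 hi1 (fun x hx => hpos x hx θ₁)
    (fun x hx => hpos x hx θ₂) (hint θ₁) (hint θ₂) fun x hx y hy hxy => ?_
  have hcross := strictMono_div_of_logDeriv_lt (hpos x hx) (hpos y hy) (hdiff x hx) (hdiff y hy)
    (fun θ => hk θ hx hy hxy) hθ
  rw [div_lt_div_iff₀ (hpos x hx θ₁) (hpos x hx θ₂)] at hcross
  rw [div_lt_div_iff₀ (hpos x hx θ₁) (hpos y hy θ₁)]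
  linarith
end

section
/- Fix a consumption-tax salience s^C ∈ (0,1), an effective tax rate τ ∈ (0,1), and a target salience s ∈ (0,1]. Define τ^L = τ[1 - ((1-τ)(1-s))/((1-τ) - s^C(1-sτ))] and τ^C = (τ - sτ)/((1-τ) - s^C(1-sτ)). Then (assuming the denominators are positive) these satisfy (1-τ^L)/(1+τ^C) = 1-τ and (1-τ^L)/(1+s^C τ^C) = 1-sτ; moreover both τ^L ≥ 0 and τ^C ≥ 0 hold if and only if s ≥ s^C/(1-τ+s^C τ), and this threshold s^C/(1-τ+s^C τ) is strictly less than 1. -/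
/-- Fix `sᶜ ∈ (0,1)`, `τ ∈ (0,1)`, `s ∈ (0,1]`, and define
`τᴸ = τ[1 - ((1-τ)(1-s))/((1-τ)-sᶜ(1-sτ))]` and `τᶜ = (τ-sτ)/((1-τ)-sᶜ(1-sτ))`.
Assuming the denominator is positive, `(1-τᴸ)/(1+τᶜ) = 1-τ` and
`(1-τᴸ)/(1+sᶜτᶜ) = 1-sτ`; moreover `τᴸ ≥ 0 ∧ τᶜ ≥ 0` iff `s ≥ sᶜ/(1-τ+sᶜτ)`, and this
threshold is strictly less than `1`. -/
theorem stmt19 (sC τ s : ℝ) (hsC0 : 0 < sC) (hsC1 : sC < 1)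
    (hτ0 : 0 < τ) (hτ1 : τ < 1) (hs0 : 0 < s) (hs1 : s ≤ 1)
    (hden : 0 < (1 - τ) - sC * (1 - s * τ))
    (τL τC : ℝ)
    (hτL : τL = τ * (1 - ((1 - τ) * (1 - s)) / ((1 - τ) - sC * (1 - s * τ))))
    (hτC : τC = (τ - s * τ) / ((1 - τ) - sC * (1 - s * τ))) :
    (1 - τL) / (1 + τC) = 1 - τ ∧
    (1 - τL) / (1 + sC * τC) = 1 - s * τ ∧
    ((0 ≤ τL ∧ 0 ≤ τC) ↔ sC / (1 - τ + sC * τ) ≤ s) ∧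
    sC / (1 - τ + sC * τ) < 1 := by
  set D : ℝ := (1 - τ) - sC * (1 - s * τ) with hD
  have hD0 : D ≠ 0 := ne_of_gt hden
  have hτC0 : 0 ≤ τC := by
    rw [hτC]
    apply div_nonneg _ (le_of_lt hden)
    nlinarith
  have h1 : 0 < 1 + τC := by linarith
  have h2 : 0 < 1 + sC * τC := by nlinarith
  have hthr : 0 < 1 - τ + sC * τ := by nlinarith
  refine ⟨?_, ?_, ?_, ?_⟩
  · rw [div_eq_iff (ne_of_gt h1), hτL, hτC]
    field_simp
    ring
  · rw [div_eq_iff (ne_of_gt h2), hτL, hτC]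
    field_simp
    ring
  · constructor
    · rintro ⟨hL, -⟩
      rw [div_le_iff₀ hthr]
      rw [hτL] at hL
      have h3 : ((1 - τ) * (1 - s)) / D ≤ 1 := by nlinarith
      have h4 : (1 - τ) * (1 - s) ≤ D := (div_le_one hden).mp h3
      nlinarith
    · intro h
      rw [div_le_iff₀ hthr] at h
      refine ⟨?_, hτC0⟩
      rw [hτL]
      have h4 : (1 - τ) * (1 - s) ≤ D := by rw [hD]; nlinarith
      have h3 : ((1 - τ) * (1 - s)) / D ≤ 1 := (div_le_one hden).mpr h4
      nlinarith
  · rw [div_lt_one hthr]; nlinarith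
end
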